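/- Let H be a real Hilbert space, C ⊆ H nonempty closed convex, d ∈ H, β > 0, and 𝓛 : K → H a bounded linear map from another Hilbert space K. Define H(p) = (1/2)(‖d − β𝓛p‖² − ‖(d − β𝓛p) − P_C(d − β𝓛p)‖²) + β⟨p, e⟩ for a fixed e ∈ K. Then H is differentiable with ∇H(p) = −β𝓛*(P_C(d − β𝓛p)) + βe, and ∇H is Lipschitz with constant β²‖𝓛‖². -/
import Mathlib

open RealInnerProductSpace

open ContinuousLinearMap

section aux
variable {H : Type*} [NormedAddCommGroup H] [InnerProductSpace ℝ H]

lemma proj_var {C : Set H} (hCconv : Convex ℝ C) {P : H → H}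
    (hP : ∀ x : H, P x ∈ C ∧ ∀ z ∈ C, ‖x - P x‖ ≤ ‖x - z‖) (x : H) :
    ∀ z ∈ C, ⟪x - P x, z - P x⟫ ≤ 0 := by
  haveI : Nonempty C := ⟨⟨P x, (hP x).1⟩⟩
  have hnorm : ‖x - P x‖ = ⨅ w : C, ‖x - w‖ := by
    apply le_antisymm
    · exact le_ciInf fun w => (hP x).2 w w.2
    · exact ciInf_le ⟨0, by rintro a ⟨w, rfl⟩; exact norm_nonneg _⟩ (⟨P x, (hP x).1⟩ : C)
  exact (norm_eq_iInf_iff_real_inner_le_zero hCconv (hP x).1).1 hnorm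

lemma proj_nonexp {C : Set H} (hCconv : Convex ℝ C) {P : H → H}
    (hP : ∀ x : H, P x ∈ C ∧ ∀ z ∈ C, ‖x - P x‖ ≤ ‖x - z‖) (x y : H) :
    ‖P x - P y‖ ≤ ‖x - y‖ := by
  have h1 := proj_var hCconv hP x (P y) (hP y).1
  have h2 := proj_var hCconv hP y (P x) (hP x).1
  have key : ‖P x - P y‖ ^ 2 ≤ ⟪x - y, P x - P y⟫ := by
    have hd : x - y = (x - P x) + (P x - P y) + (P y - y) := by abel
    rw [hd, inner_add_left, inner_add_left, real_inner_self_eq_norm_sq]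
    have e1 : ⟪x - P x, P x - P y⟫ = -⟪x - P x, P y - P x⟫ := by
      rw [← inner_neg_right]; congr 1; abel
    have e2 : ⟪P y - y, P x - P y⟫ = -⟪y - P y, P x - P y⟫ := by
      rw [← inner_neg_left]; congr 1; abel
    linarith [h1, h2, e1, e2]
  have cs := real_inner_le_norm (x - y) (P x - P y)
  rcases (norm_nonneg (P x - P y)).eq_or_lt with h | h
  · linarith [norm_nonneg (x - y)]
  · nlinarith

lemma moreau_grad [CompleteSpace H] {C : Set H} (hCconv : Convex ℝ C) {P : H → H}
    (hP : ∀ x : H, P x ∈ C ∧ ∀ z ∈ C, ‖x - P x‖ ≤ ‖x - z‖) (x₀ : H) :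
    HasFDerivAt (fun x : H => (1 / 2) * (‖x‖ ^ 2 - ‖x - P x‖ ^ 2))
      (InnerProductSpace.toDual ℝ H (P x₀)) x₀ := by
  set φ : H → ℝ := fun x => (1 / 2) * (‖x‖ ^ 2 - ‖x - P x‖ ^ 2) with hφ
  have exact_eq : ∀ x z : H, (1 / 2) * (‖x‖ ^ 2 - ‖x - z‖ ^ 2) = ⟪x, z⟫ - (1 / 2) * ‖z‖ ^ 2 := by
    intro x z
    have := norm_sub_sq_real x z
    linarith
  have keybound : ∀ y : H, |φ y - φ x₀ - ⟪P x₀, y - x₀⟫| ≤ ‖y - x₀‖ ^ 2 := by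
    intro y
    have hyx : ⟪P x₀, y - x₀⟫ = ⟪y, P x₀⟫ - ⟪x₀, P x₀⟫ := by
      rw [real_inner_comm, inner_sub_left]
    have hx0 : φ x₀ = ⟪x₀, P x₀⟫ - (1 / 2) * ‖P x₀‖ ^ 2 := exact_eq x₀ (P x₀)
    have hy : φ y = ⟪y, P y⟫ - (1 / 2) * ‖P y‖ ^ 2 := exact_eq y (P y)
    have hlow : φ y ≥ ⟪y, P x₀⟫ - (1 / 2) * ‖P x₀‖ ^ 2 := by
      have h1 : ‖y - P y‖ ≤ ‖y - P x₀‖ := (hP y).2 (P x₀) (hP x₀).1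
      have h2 : ‖y - P y‖ ^ 2 ≤ ‖y - P x₀‖ ^ 2 := pow_le_pow_left₀ (norm_nonneg _) h1 2
      have h3 := exact_eq y (P x₀)
      have h4 : φ y = 1 / 2 * (‖y‖ ^ 2 - ‖y - P y‖ ^ 2) := rfl
      linarith
    have hlow' : φ x₀ ≥ ⟪x₀, P y⟫ - (1 / 2) * ‖P y‖ ^ 2 := by
      have h1 : ‖x₀ - P x₀‖ ≤ ‖x₀ - P y‖ := (hP x₀).2 (P y) (hP y).1
      have h2 : ‖x₀ - P x₀‖ ^ 2 ≤ ‖x₀ - P y‖ ^ 2 := pow_le_pow_left₀ (norm_nonneg _) h1 2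
      have h3 := exact_eq x₀ (P y)
      have h4 : φ x₀ = 1 / 2 * (‖x₀‖ ^ 2 - ‖x₀ - P x₀‖ ^ 2) := rfl
      linarith
    have hupper : φ y - φ x₀ - ⟪P x₀, y - x₀⟫ ≤ ⟪y - x₀, P y - P x₀⟫ := by
      rw [hyx]
      have : ⟪y - x₀, P y - P x₀⟫ = ⟪y, P y⟫ - ⟪x₀, P y⟫ - (⟪y, P x₀⟫ - ⟪x₀, P x₀⟫) := by
        rw [inner_sub_left, inner_sub_right, inner_sub_right]; ring
      rw [this]
      linarith
    have hcs : ⟪y - x₀, P y - P x₀⟫ ≤ ‖y - x₀‖ * ‖P y - P x₀‖ :=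
      real_inner_le_norm _ _
    have hne : ‖P y - P x₀‖ ≤ ‖y - x₀‖ := proj_nonexp hCconv hP y x₀
    have hfinal : φ y - φ x₀ - ⟪P x₀, y - x₀⟫ ≤ ‖y - x₀‖ ^ 2 := by
      nlinarith [norm_nonneg (y - x₀)]
    have hlb : 0 ≤ φ y - φ x₀ - ⟪P x₀, y - x₀⟫ := by
      rw [hyx]; linarith
    rw [abs_le]
    constructor <;> nlinarith [sq_nonneg ‖y - x₀‖]
  rw [hasFDerivAt_iff_isLittleO_nhds_zero, Asymptotics.isLittleO_iff]
  intro c hc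
  filter_upwards [Metric.ball_mem_nhds (0 : H) hc] with h hball
  have hd : ‖h‖ < c := by rwa [Metric.mem_ball, dist_zero_right] at hball
  have hk := keybound (x₀ + h)
  rw [add_sub_cancel_left] at hk
  rw [InnerProductSpace.toDual_apply_apply, Real.norm_eq_abs]
  have hnn : (0:ℝ) ≤ ‖h‖ := norm_nonneg _
  nlinarith
end aux

/-- The dual objective `H(p) = ½(‖d - β𝓛p‖² - ‖(d - β𝓛p) - P_C(d - β𝓛p)‖²)
+ β⟨p, e⟩` is differentiable with gradient
`∇H(p) = -β𝓛*(P_C(d - β𝓛p)) + βe`, and `∇H` is Lipschitz with constant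
`β²‖𝓛‖²`. -/
theorem dual_gradient_lipschitz
    {H K : Type*} [NormedAddCommGroup H] [InnerProductSpace ℝ H] [CompleteSpace H]
    [NormedAddCommGroup K] [InnerProductSpace ℝ K] [CompleteSpace K]
    (C : Set H) (hCne : C.Nonempty) (hCc : IsClosed C) (hCconv : Convex ℝ C)
    (P : H → H)
    (hP : ∀ x : H, P x ∈ C ∧ ∀ z ∈ C, ‖x - P x‖ ≤ ‖x - z‖)
    (L : K →L[ℝ] H) (d : H) (e : K) (β : ℝ) (hβ : 0 < β)
    (G : K → K)
    (hG : ∀ p : K, G p = -β • (adjoint L) (P (d - β • L p)) + β • e) :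
    (∀ p : K,
        HasGradientAt (fun p : K =>
          (1 / 2) * (‖d - β • L p‖ ^ 2 -
            ‖(d - β • L p) - P (d - β • L p)‖ ^ 2) + β * ⟪p, e⟫) (G p) p) ∧
      ∀ p₁ p₂ : K, ‖G p₁ - G p₂‖ ≤ β ^ 2 * ‖L‖ ^ 2 * ‖p₁ - p₂‖ := by
  constructor
  · intro p
    have hu : HasFDerivAt (fun q : K => d - β • L q) (-(β • L)) p := by
      simpa using (((L.hasFDerivAt (x := p)).const_smul β).const_sub d)
    have hφ := moreau_grad hCconv hP (d - β • L p)
    have hcomp := hφ.comp p hu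
    have hinner : HasFDerivAt (fun q : K => β * ⟪q, e⟫) (β • (innerSL ℝ e)) p := by
      have heq : (fun q : K => β * ⟪q, e⟫) = fun q : K => β * (innerSL ℝ e q) := by
        funext q
        simp [real_inner_comm]
      rw [heq]
      exact ((innerSL ℝ e).hasFDerivAt).const_mul β
    have htot := hcomp.add hinner
    have hEq : ((InnerProductSpace.toDual ℝ H (P (d - β • L p))).comp (-(β • L))
        + β • (innerSL ℝ e)) = InnerProductSpace.toDual ℝ K (G p) := by
      ext v
      simp only [ContinuousLinearMap.add_apply, ContinuousLinearMap.comp_apply,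
        ContinuousLinearMap.neg_apply, ContinuousLinearMap.smul_apply,
        InnerProductSpace.toDual_apply_apply, innerSL_apply_apply, hG p]
      rw [inner_add_left, inner_smul_left, inner_smul_left, inner_neg_right, real_inner_smul_right]
      rw [adjoint_inner_left]
      simp [real_inner_comm e v]
    rw [hasGradientAt_iff_hasFDerivAt, ← hEq]
    exact htot
  · intro p₁ p₂
    have hdiff : G p₁ - G p₂ =
        -β • ((adjoint L) (P (d - β • L p₁)) - (adjoint L) (P (d - β • L p₂))) := by
      rw [hG p₁, hG p₂, smul_sub]
      abel
    rw [hdiff, norm_smul, ← map_sub]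
    have h1 : ‖(adjoint L) (P (d - β • L p₁) - P (d - β • L p₂))‖
        ≤ ‖L‖ * ‖P (d - β • L p₁) - P (d - β • L p₂)‖ := by
      calc ‖(adjoint L) (P (d - β • L p₁) - P (d - β • L p₂))‖
          ≤ ‖adjoint L‖ * ‖P (d - β • L p₁) - P (d - β • L p₂)‖ := le_opNorm _ _
        _ = ‖L‖ * ‖P (d - β • L p₁) - P (d - β • L p₂)‖ := by rw [adjoint.norm_map]
    have h2 : ‖P (d - β • L p₁) - P (d - β • L p₂)‖ ≤ ‖(d - β • L p₁) - (d - β • L p₂)‖ :=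
      proj_nonexp hCconv hP _ _
    have h3 : ‖(d - β • L p₁) - (d - β • L p₂)‖ = β * ‖L (p₁ - p₂)‖ := by
      have : (d - β • L p₁) - (d - β • L p₂) = -(β • L (p₁ - p₂)) := by
        rw [map_sub, smul_sub]; abel
      rw [this, norm_neg, norm_smul, Real.norm_eq_abs, abs_of_pos hβ]
    have h4 : ‖L (p₁ - p₂)‖ ≤ ‖L‖ * ‖p₁ - p₂‖ := le_opNorm _ _
    have h5 : ‖(-β : ℝ)‖ = β := by rw [Real.norm_eq_abs, abs_neg, abs_of_pos hβ]
    rw [h5]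
    have hLn : (0:ℝ) ≤ ‖L‖ := norm_nonneg _
    calc β * ‖(adjoint L) (P (d - β • L p₁) - P (d - β • L p₂))‖
        ≤ β * (‖L‖ * ‖P (d - β • L p₁) - P (d - β • L p₂)‖) := by
          exact mul_le_mul_of_nonneg_left h1 hβ.le
      _ ≤ β * (‖L‖ * (β * ‖L (p₁ - p₂)‖)) := by
          apply mul_le_mul_of_nonneg_left _ hβ.le
          apply mul_le_mul_of_nonneg_left _ hLn
          rw [← h3]; exact h2
      _ ≤ β * (‖L‖ * (β * (‖L‖ * ‖p₁ - p₂‖))) := by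
          apply mul_le_mul_of_nonneg_left _ hβ.le
          apply mul_le_mul_of_nonneg_left _ hLn
          exact mul_le_mul_of_nonneg_left h4 hβ.le
      _ = β ^ 2 * ‖L‖ ^ 2 * ‖p₁ - p₂‖ := by ring
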